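/- Let 0 < ρ < 1 and 0 < ε < 1, and set δ = ρ·ε / (14 + 4/ε). If G and G′ are graphs on the same vertex set of size n, each with at least ρ·n²/2 edges, and their cut distance satisfies d_□(G, G′) ≤ δ, then |q*(G) − q*(G′)| ≤ ε. -/

import Mathlib

open Finset
open scoped Classical

/-- The number of edges of a finite graph. -/
noncomputable def edgeCount {V : Type} [Fintype V] [DecidableEq V] (G : SimpleGraph V) : ℕ :=
  G.edgeFinset.card

/-- vol(A): the sum over vertices of A of their degree in G. -/
noncomputable def degSum {V : Type} [Fintype V] [DecidableEq V] (G : SimpleGraph V)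
    (A : Finset V) : ℕ :=
  ∑ v ∈ A, G.degree v

/-- e(A): the number of edges of G with both endpoints in A. -/
noncomputable def intEdges {V : Type} [Fintype V] [DecidableEq V] (G : SimpleGraph V)
    (A : Finset V) : ℕ :=
  (G.edgeFinset.filter (fun e => ∀ v ∈ e, v ∈ A)).card

/-- The modularity score q_𝒜(G) of a vertex partition 𝒜 of G; it is 0 if G has no edges. -/
noncomputable def modScore {V : Type} [Fintype V] [DecidableEq V] (G : SimpleGraph V)
    (P : Finpartition (univ : Finset V)) : ℝ :=
  if edgeCount G = 0 then 0 else
    (∑ A ∈ P.parts, (intEdges G A : ℝ)) / (edgeCount G : ℝ)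
      - (∑ A ∈ P.parts, (degSum G A : ℝ) ^ 2) / (4 * (edgeCount G : ℝ) ^ 2)

/-- The modularity q*(G) of a graph: the maximum of q_𝒜(G) over all vertex partitions 𝒜. -/
noncomputable def modularity {V : Type} [Fintype V] [DecidableEq V] (G : SimpleGraph V) : ℝ :=
  ⨆ P : Finpartition (univ : Finset V), modScore G P

/-- The probability that the random subgraph G_p of G (each edge of G retained
independently with probability p) satisfies the predicate Q. -/
noncomputable def subgraphProb {V : Type} [Fintype V] [DecidableEq V] (G : SimpleGraph V)
    (p : ℝ) (Q : SimpleGraph V → Prop) : ℝ :=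
  ∑ F ∈ G.edgeFinset.powerset,
    if Q (SimpleGraph.fromEdgeSet (F : Set (Sym2 V))) then
      p ^ F.card * (1 - p) ^ (G.edgeFinset.card - F.card)
    else 0

/-- e_G(S, T): the number of ordered pairs (s, t) ∈ S × T with st an edge of G. -/
noncomputable def ePairs {V : Type} [Fintype V] [DecidableEq V] (G : SimpleGraph V)
    (S T : Finset V) : ℕ :=
  ((S ×ˢ T).filter (fun st => G.Adj st.1 st.2)).card

/-- The cut distance d_□(G, G′) = n⁻² · max_{S,T ⊆ V} |e_G(S,T) − e_{G′}(S,T)|. -/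
noncomputable def cutDist {V : Type} [Fintype V] [DecidableEq V]
    (G G' : SimpleGraph V) : ℝ :=
  (⨆ S : Finset V, ⨆ T : Finset V, |(ePairs G S T : ℝ) - (ePairs G' S T : ℝ)|) /
    (Fintype.card V : ℝ) ^ 2

/-!
Every partition can be coarsened to one with at most `k` parts at a cost of at most `1/k` in
score: put its parts into `k` bins greedily, each into the currently lightest bin. Coarsening
never loses internal edges, and the degree tax `∑ (vol A / 2m)²` grows by at most `1/k`.
For a fixed partition every quantity in the score is a cut count (`e_G(A, A) = 2 e(A)`,
`e_G(A, V) = vol A`, `e_G(V, V) = 2m`). When both graphs have at least `ρn²/2` edges, cut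
distance at most `ρβ`, with `β = ε / (14 + 4/ε)`, moves each of them by at most `2βm`, hence the
score of a partition with at most `k` parts by at most `(k + 5)β`. With `k = ⌈2/ε⌉` both errors
are at most `ε/2`.
-/

theorem exists_sum_sq_fiber_le {ι : Type*} [DecidableEq ι] (s : Finset ι) (w : ι → ℝ)
    (hw : ∀ i ∈ s, 0 ≤ w i) {k : ℕ} (hk : 0 < k) :
    ∃ f : ι → Fin k, ∑ j, (∑ i ∈ s with f i = j, w i) ^ 2
      ≤ ∑ i ∈ s, w i ^ 2 + (∑ i ∈ s, w i) ^ 2 / k := by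
  have : NeZero k := ⟨hk.ne'⟩
  induction s using Finset.induction_on with
  | empty => exact ⟨fun _ => 0, by simp⟩
  | @insert i₀ s hi₀ ih =>
    obtain ⟨f, hf⟩ := ih fun i hi => hw i (mem_insert_of_mem hi)
    set load : Fin k → ℝ := fun j => ∑ i ∈ s with f i = j, w i
    set W := ∑ i ∈ s, w i
    have hk' : (0 : ℝ) < k := by exact_mod_cast hk
    obtain ⟨j₀, -, hj₀⟩ : ∃ j₀ ∈ univ, load j₀ ≤ W / k := by
      refine Finset.exists_le_of_sum_le univ_nonempty ?_
      rw [Finset.sum_fiberwise s f w, sum_const, card_univ, Fintype.card_fin, nsmul_eq_mul,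
        mul_div_cancel₀ _ hk'.ne']
    have hload : ∀ j, ∑ i ∈ insert i₀ s with Function.update f i₀ j₀ i = j, w i
        = load j + if j = j₀ then w i₀ else 0 := by
      intro j
      rw [sum_filter, sum_insert hi₀, Function.update_self, add_comm]
      simp only [load, sum_filter]
      congr 1
      · exact sum_congr rfl fun i hi => by
          rw [Function.update_of_ne (ne_of_mem_of_not_mem hi hi₀)]
      · simp only [eq_comm]
    refine ⟨Function.update f i₀ j₀, ?_⟩
    have hw₀ := hw i₀ (mem_insert_self i₀ s)
    calc ∑ j, (∑ i ∈ insert i₀ s with Function.update f i₀ j₀ i = j, w i) ^ 2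
        = ∑ j, load j ^ 2 + (2 * load j₀ * w i₀ + w i₀ ^ 2) := by
          simp_rw [hload, add_sq, sum_add_distrib]
          simp only [mul_ite, mul_zero, ite_pow, ne_eq, OfNat.ofNat_ne_zero, not_false_eq_true,
            zero_pow, sum_ite_eq', mem_univ, if_true]
          ring
      _ ≤ ∑ i ∈ s, w i ^ 2 + W ^ 2 / k + (2 * (W / k) * w i₀ + w i₀ ^ 2) := by
          gcongr
      _ ≤ ∑ i ∈ insert i₀ s, w i ^ 2 + (∑ i ∈ insert i₀ s, w i) ^ 2 / k := by
          have hsq : (w i₀ + W) ^ 2 / k = w i₀ ^ 2 / k + 2 * (W / k) * w i₀ + W ^ 2 / k := by ring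
          have : 0 ≤ w i₀ ^ 2 / k := by positivity
          rw [sum_insert hi₀, sum_insert hi₀, hsq]
          linarith

theorem abs_div_sub_div_le {S S' M M' a b : ℝ} (hM : 0 < M) (hM' : 0 < M') (hS : 0 ≤ S)
    (hSM : S ≤ M) (hSS' : |S - S'| ≤ a * M') (hMM' : |M - M'| ≤ b * M') :
    |S / M - S' / M'| ≤ a + b := by
  have hsplit : S / M - S' / M' = (S - S') / M' + S / M * ((M' - M) / M') := by
    field_simp
    ring
  have hdiff : |(S - S') / M'| ≤ a := by rwa [abs_div, abs_of_pos hM', div_le_iff₀ hM']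
  have hscale : |(M' - M) / M'| ≤ b := by
    rwa [abs_div, abs_of_pos hM', div_le_iff₀ hM', abs_sub_comm]
  have hratio : |S / M| ≤ 1 := by
    rw [abs_of_nonneg (by positivity)]
    exact div_le_one_of_le₀ hSM hM.le
  calc |S / M - S' / M'| ≤ |(S - S') / M'| + |S / M| * |(M' - M) / M'| := by
        rw [hsplit, ← abs_mul]
        exact abs_add_le _ _
    _ ≤ a + 1 * b := by gcongr
    _ = a + b := by ring

theorem abs_sum_sq_sub_sum_sq_le {ι : Type*} {s : Finset ι} {x y : ι → ℝ} {c : ℝ} (hc : 0 ≤ c)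
    (hx : ∀ i ∈ s, 0 ≤ x i) (hy : ∀ i ∈ s, 0 ≤ y i) (hsx : ∑ i ∈ s, x i ≤ 1)
    (hsy : ∑ i ∈ s, y i ≤ 1) (hxy : ∀ i ∈ s, |x i - y i| ≤ c) :
    |∑ i ∈ s, x i ^ 2 - ∑ i ∈ s, y i ^ 2| ≤ 2 * c := by
  calc |∑ i ∈ s, x i ^ 2 - ∑ i ∈ s, y i ^ 2| ≤ ∑ i ∈ s, (x i + y i) * |x i - y i| := by
        rw [← sum_sub_distrib]
        refine (abs_sum_le_sum_abs _ _).trans (sum_le_sum fun i hi => ?_)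
        rw [sq_sub_sq, abs_mul, abs_of_nonneg (add_nonneg (hx i hi) (hy i hi))]
    _ ≤ ∑ i ∈ s, (x i + y i) * c :=
        sum_le_sum fun i hi => by gcongr; exacts [add_nonneg (hx i hi) (hy i hi), hxy i hi]
    _ ≤ 2 * c := by
        rw [← sum_mul, sum_add_distrib]
        nlinarith

namespace Finpartition

variable {α : Type*} [DecidableEq α]

theorem sum_sum_parts {s : Finset α} (P : Finpartition s) {M : Type*} [AddCommMonoid M]
    (g : α → M) : ∑ A ∈ P.parts, ∑ a ∈ A, g a = ∑ a ∈ s, g a := by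
  conv_rhs => rw [← P.biUnion_parts]
  exact (sum_biUnion P.supIndep.pairwiseDisjoint).symm

theorem sum_filter_comp_part {s : Finset α} (P : Finpartition s) {ι : Type*} [DecidableEq ι]
    (f : Finset α → ι) (j : ι) {M : Type*} [AddCommMonoid M] (g : α → M) :
    ∑ a ∈ s with f (P.part a) = j, g a = ∑ A ∈ P.parts with f A = j, ∑ a ∈ A, g a := by
  rw [sum_filter, sum_filter, ← P.sum_sum_parts]
  refine sum_congr rfl fun A hA => ?_
  split_ifs with hfA
  · exact sum_congr rfl fun a ha => by rw [P.part_eq_of_mem hA ha, if_pos hfA]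
  · exact sum_eq_zero fun a ha => by rw [P.part_eq_of_mem hA ha, if_neg hfA]

variable [Fintype α] {ι : Type*}

theorem le_ofSetoid_ker_comp_part (P : Finpartition (univ : Finset α)) (f : Finset α → ι)
    [DecidableRel (Setoid.ker fun a => f (P.part a)).r] :
    P ≤ ofSetoid (Setoid.ker fun a => f (P.part a)) := by
  intro A hA
  obtain ⟨a, ha⟩ := P.nonempty_of_mem_parts hA
  refine ⟨_, (ofSetoid _).part_mem.2 (mem_univ a), fun b hb => ?_⟩
  rw [mem_part_ofSetoid_iff_rel, Setoid.ker_def, P.part_eq_of_mem hA ha, P.part_eq_of_mem hA hb]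

theorem ofSetoid_ker_parts [DecidableEq ι] (h : α → ι) [DecidableRel (Setoid.ker h).r] :
    (ofSetoid (Setoid.ker h)).parts = (univ.image h).image fun j => ({a | h a = j} : Finset α) := by
  rw [image_image, ofSetoid, ofSetSetoid_parts]
  refine image_congr fun a _ => ?_
  ext b
  simp [Setoid.ker_def, eq_comm]

theorem card_parts_ofSetoid_ker_le [DecidableEq ι] [Fintype ι] (h : α → ι)
    [DecidableRel (Setoid.ker h).r] :
    #(ofSetoid (Setoid.ker h)).parts ≤ Fintype.card ι := by
  rw [ofSetoid_ker_parts]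
  exact card_image_le.trans (card_le_univ _)

theorem sum_parts_ofSetoid_ker [DecidableEq ι] [Fintype ι] (h : α → ι)
    [DecidableRel (Setoid.ker h).r]
    {M : Type*} [AddCommMonoid M] {F : Finset α → M} (hF : F ∅ = 0) :
    ∑ B ∈ (ofSetoid (Setoid.ker h)).parts, F B = ∑ j, F ({a | h a = j} : Finset α) := by
  rw [ofSetoid_ker_parts, sum_image]
  · refine sum_subset (subset_univ _) fun j _ hj => ?_
    rw [← hF]
    congr
    ext a
    simp only [mem_image, mem_univ, true_and, not_exists] at hj
    simp [hj a]
  · intro j₁ hj₁ j₂ _ hfib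
    obtain ⟨a, -, rfl⟩ := mem_image.mp hj₁
    simpa using (Finset.ext_iff.mp hfib a).mp (by simp)

end Finpartition

section Graph

variable {V : Type} [Fintype V] [DecidableEq V]

theorem ePairs_univ_right (G : SimpleGraph V) (A : Finset V) : ePairs G A univ = degSum G A := by
  rw [ePairs, degSum, card_filter, sum_product]
  refine sum_congr rfl fun a _ => ?_
  rw [← card_filter, ← G.neighborFinset_eq_filter, G.card_neighborFinset_eq_degree]

theorem card_filter_sym2Mk_eq_two (G : SimpleGraph V) (A : Finset V) {e : Sym2 V}
    (he : e ∈ G.edgeFinset.filter fun e => ∀ v ∈ e, v ∈ A) :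
    #{p ∈ (A ×ˢ A).filter (fun p => G.Adj p.1 p.2) | s(p.1, p.2) = e} = 2 := by
  induction e using Sym2.ind with
  | _ a b =>
    simp only [mem_filter, SimpleGraph.mem_edgeFinset, SimpleGraph.mem_edgeSet, Sym2.mem_iff,
      forall_eq_or_imp, forall_eq] at he
    obtain ⟨hab, ha, hb⟩ := he
    have hpairs : {p ∈ (A ×ˢ A).filter (fun p => G.Adj p.1 p.2) | s(p.1, p.2) = s(a, b)}
        = {(a, b), (b, a)} := by
      ext ⟨x, y⟩
      simp only [mem_filter, mem_product, mem_insert, mem_singleton, Prod.mk.injEq, Sym2.eq_iff]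
      constructor
      · rintro ⟨-, h⟩
        exact h
      · rintro (⟨rfl, rfl⟩ | ⟨rfl, rfl⟩)
        exacts [⟨⟨⟨ha, hb⟩, hab⟩, Or.inl ⟨rfl, rfl⟩⟩, ⟨⟨⟨hb, ha⟩, hab.symm⟩, Or.inr ⟨rfl, rfl⟩⟩]
    rw [hpairs, card_pair]
    simp [hab.ne]

theorem ePairs_self (G : SimpleGraph V) (A : Finset V) : ePairs G A A = 2 * intEdges G A := by
  rw [ePairs, intEdges, card_eq_sum_card_fiberwise (f := fun p : V × V => s(p.1, p.2))
    (t := G.edgeFinset.filter fun e => ∀ v ∈ e, v ∈ A), sum_congr rfl fun e he =>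
      card_filter_sym2Mk_eq_two G A he, sum_const, smul_eq_mul, mul_comm]
  rintro ⟨a, b⟩ hp
  simp only [coe_filter, mem_product, Set.mem_ofPred_eq] at hp
  simp only [coe_filter, SimpleGraph.mem_edgeFinset, SimpleGraph.mem_edgeSet, Sym2.mem_iff,
    forall_eq_or_imp, forall_eq, Set.mem_ofPred_eq]
  exact ⟨hp.2, hp.1⟩

theorem intEdges_univ (G : SimpleGraph V) : intEdges G univ = edgeCount G := by
  rw [intEdges, edgeCount, filter_true_of_mem fun e _ v _ => mem_univ v]

theorem ePairs_univ_univ (G : SimpleGraph V) : ePairs G univ univ = 2 * edgeCount G := by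
  rw [ePairs_self, intEdges_univ]

theorem abs_ePairs_sub_ePairs_le [Nonempty V] (G G' : SimpleGraph V) (S T : Finset V) :
    |(ePairs G S T : ℝ) - ePairs G' S T| ≤ cutDist G G' * Fintype.card V ^ 2 := by
  rw [cutDist, div_mul_cancel₀ _ (by positivity)]
  exact (le_ciSup (Set.finite_range _).bddAbove T).trans
    (le_ciSup (f := fun S => ⨆ T, |(ePairs G S T : ℝ) - ePairs G' S T|)
      (Set.finite_range _).bddAbove S)

theorem sum_degSum_parts (G : SimpleGraph V) (P : Finpartition (univ : Finset V)) :
    ∑ A ∈ P.parts, degSum G A = 2 * edgeCount G := by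
  simp only [degSum, P.sum_sum_parts, G.sum_degrees_eq_twice_card_edges, edgeCount]

theorem degSum_le_two_mul_edgeCount (G : SimpleGraph V) (A : Finset V) :
    degSum G A ≤ 2 * edgeCount G := by
  rw [degSum, edgeCount, ← G.sum_degrees_eq_twice_card_edges]
  exact sum_le_sum_of_subset (subset_univ A)

theorem sum_intEdges_parts (G : SimpleGraph V) {s : Finset V} (P : Finpartition s) :
    ∑ A ∈ P.parts, intEdges G A = #{e ∈ G.edgeFinset | ∃ A ∈ P.parts, ∀ v ∈ e, v ∈ A} := by
  simp only [intEdges]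
  rw [← card_biUnion]
  · congr 1
    ext e
    simp only [mem_biUnion, mem_filter]
    tauto
  · intro A hA B hB hAB
    refine disjoint_left.mpr fun e heA heB => ?_
    have hv := Sym2.out_fst_mem e
    exact disjoint_left.mp (P.disjoint hA hB hAB) ((mem_filter.mp heA).2 _ hv)
      ((mem_filter.mp heB).2 _ hv)

theorem sum_intEdges_parts_le_edgeCount (G : SimpleGraph V) {s : Finset V} (P : Finpartition s) :
    ∑ A ∈ P.parts, intEdges G A ≤ edgeCount G := by
  rw [sum_intEdges_parts]
  exact card_filter_le _ _

theorem sum_intEdges_parts_mono (G : SimpleGraph V) {s : Finset V} {P Q : Finpartition s}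
    (hPQ : P ≤ Q) :
    ∑ A ∈ P.parts, intEdges G A ≤ ∑ B ∈ Q.parts, intEdges G B := by
  rw [sum_intEdges_parts, sum_intEdges_parts]
  refine card_le_card (monotone_filter_right _ fun e _ ⟨A, hA, heA⟩ => ?_)
  obtain ⟨B, hB, hAB⟩ := hPQ hA
  exact ⟨B, hB, fun v hv => hAB (heA v hv)⟩

theorem modScore_eq_of_ne_zero (G : SimpleGraph V) (P : Finpartition (univ : Finset V))
    (hm : edgeCount G ≠ 0) :
    modScore G P = (∑ A ∈ P.parts, (intEdges G A : ℝ)) / edgeCount G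
      - ∑ A ∈ P.parts, ((degSum G A : ℝ) / (2 * edgeCount G)) ^ 2 := by
  rw [modScore, if_neg hm]
  congr 1
  rw [sum_div]
  exact sum_congr rfl fun A _ => by ring

theorem sum_degSum_div_parts (G : SimpleGraph V) (P : Finpartition (univ : Finset V))
    (hm : edgeCount G ≠ 0) : ∑ A ∈ P.parts, (degSum G A : ℝ) / (2 * edgeCount G) = 1 := by
  rw [← sum_div, div_eq_one_iff_eq (by positivity)]
  exact_mod_cast sum_degSum_parts G P

theorem modScore_le_modularity (G : SimpleGraph V) (P : Finpartition (univ : Finset V)) :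
    modScore G P ≤ modularity G :=
  le_ciSup (Set.finite_range _).bddAbove P

theorem exists_card_parts_le_modScore_le (G : SimpleGraph V) (P : Finpartition (univ : Finset V))
    {k : ℕ} (hk : 0 < k) :
    ∃ Q : Finpartition (univ : Finset V), #Q.parts ≤ k ∧ modScore G P ≤ modScore G Q + 1 / k := by
  let x (A : Finset V) : ℝ := degSum G A / (2 * edgeCount G)
  obtain ⟨f, hf⟩ := exists_sum_sq_fiber_le P.parts x (fun _ _ => by positivity) hk
  let Q : Finpartition (univ : Finset V) := .ofSetoid (Setoid.ker fun v => f (P.part v))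
  refine ⟨Q, (Finpartition.card_parts_ofSetoid_ker_le _).trans (Fintype.card_fin k).le, ?_⟩
  by_cases hm : edgeCount G = 0
  · simp only [modScore, hm, if_true, zero_add]
    positivity
  have htax : ∑ B ∈ Q.parts, x B ^ 2 = ∑ j, (∑ A ∈ P.parts with f A = j, x A) ^ 2 := by
    rw [Finpartition.sum_parts_ofSetoid_ker _ (by simp [x, degSum])]
    refine sum_congr rfl fun j _ => ?_
    simp only [x, degSum, ← sum_div]
    push_cast
    rw [← P.sum_filter_comp_part]
  have hsquares : ∑ B ∈ Q.parts, x B ^ 2 ≤ ∑ A ∈ P.parts, x A ^ 2 + 1 / k := by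
    rwa [htax, ← one_pow 2, ← sum_degSum_div_parts G P hm]
  have hedges : (∑ A ∈ P.parts, (intEdges G A : ℝ)) / edgeCount G
      ≤ (∑ B ∈ Q.parts, (intEdges G B : ℝ)) / edgeCount G := by
    gcongr ?_ / _
    exact_mod_cast sum_intEdges_parts_mono G (P.le_ofSetoid_ker_comp_part f)
  rw [modScore_eq_of_ne_zero G P hm, modScore_eq_of_ne_zero G Q hm]
  linarith

theorem abs_sum_intEdges_div_sub_le {G G' : SimpleGraph V} {β : ℝ} (hm : 0 < edgeCount G)
    (hm' : 0 < edgeCount G')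
    (hedge : ∀ A, |(intEdges G A : ℝ) - intEdges G' A| ≤ β * edgeCount G')
    (hcount : |(edgeCount G : ℝ) - edgeCount G'| ≤ β * edgeCount G')
    (P : Finpartition (univ : Finset V)) {k : ℕ} (hP : #P.parts ≤ k) :
    |(∑ A ∈ P.parts, (intEdges G A : ℝ)) / edgeCount G
      - (∑ A ∈ P.parts, (intEdges G' A : ℝ)) / edgeCount G'| ≤ k * β + β := by
  have hβ : 0 ≤ β := nonneg_of_mul_nonneg_left ((abs_nonneg _).trans hcount) (by positivity)
  refine abs_div_sub_div_le (by positivity) (by positivity) (by positivity)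
    (by exact_mod_cast sum_intEdges_parts_le_edgeCount G P) ?_ hcount
  calc |∑ A ∈ P.parts, (intEdges G A : ℝ) - ∑ A ∈ P.parts, (intEdges G' A : ℝ)|
      ≤ ∑ A ∈ P.parts, |(intEdges G A : ℝ) - intEdges G' A| := by
        rw [← sum_sub_distrib]
        exact abs_sum_le_sum_abs _ _
    _ ≤ #P.parts * (β * edgeCount G') := by
        rw [← nsmul_eq_mul]
        exact sum_le_card_nsmul _ _ _ fun A _ => hedge A
    _ ≤ k * β * edgeCount G' := by
        rw [← mul_assoc]
        gcongr

theorem abs_sum_degSum_div_sq_sub_le {G G' : SimpleGraph V} {β : ℝ} (hm : 0 < edgeCount G)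
    (hm' : 0 < edgeCount G')
    (hvol : ∀ A, |(degSum G A : ℝ) - degSum G' A| ≤ β * (2 * edgeCount G'))
    (hcount : |2 * (edgeCount G : ℝ) - 2 * edgeCount G'| ≤ β * (2 * edgeCount G'))
    (P : Finpartition (univ : Finset V)) :
    |∑ A ∈ P.parts, ((degSum G A : ℝ) / (2 * edgeCount G)) ^ 2
      - ∑ A ∈ P.parts, ((degSum G' A : ℝ) / (2 * edgeCount G')) ^ 2| ≤ 2 * (2 * β) := by
  have hβ : 0 ≤ β := nonneg_of_mul_nonneg_left ((abs_nonneg _).trans hcount) (by positivity)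
  refine abs_sum_sq_sub_sum_sq_le (by positivity) (fun _ _ => by positivity)
    (fun _ _ => by positivity) (sum_degSum_div_parts G P hm.ne').le
    (sum_degSum_div_parts G' P hm'.ne').le fun A _ => ?_
  rw [two_mul β]
  exact abs_div_sub_div_le (by positivity) (by positivity) (by positivity)
    (by exact_mod_cast degSum_le_two_mul_edgeCount G A) (hvol A) hcount

theorem abs_modScore_sub_le {G G' : SimpleGraph V} {β : ℝ} (hm : 0 < edgeCount G)
    (hm' : 0 < edgeCount G')
    (hcut : ∀ S T, |(ePairs G S T : ℝ) - ePairs G' S T| ≤ 2 * β * edgeCount G')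
    (P : Finpartition (univ : Finset V)) {k : ℕ} (hP : #P.parts ≤ k) :
    |modScore G P - modScore G' P| ≤ (k + 5) * β := by
  have hedge : ∀ A, |(intEdges G A : ℝ) - intEdges G' A| ≤ β * edgeCount G' := by
    intro A
    have := hcut A A
    rw [ePairs_self, ePairs_self, Nat.cast_mul, Nat.cast_mul, Nat.cast_ofNat, ← mul_sub, abs_mul,
      abs_two] at this
    linarith
  have hvol : ∀ A, |(degSum G A : ℝ) - degSum G' A| ≤ β * (2 * edgeCount G') := by
    intro A
    rw [← ePairs_univ_right, ← ePairs_univ_right, ← mul_assoc, mul_comm β]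
    exact hcut A univ
  have hcount : |2 * (edgeCount G : ℝ) - 2 * edgeCount G'| ≤ β * (2 * edgeCount G') := by
    have := hcut univ univ
    rw [ePairs_univ_univ, ePairs_univ_univ] at this
    push_cast at this
    linarith
  have hcount' : |(edgeCount G : ℝ) - edgeCount G'| ≤ β * edgeCount G' := by
    rw [← mul_sub, abs_mul, abs_two] at hcount
    linarith
  rw [modScore_eq_of_ne_zero G P hm.ne', modScore_eq_of_ne_zero G' P hm'.ne', sub_sub_sub_comm]
  calc _ ≤ (k * β + β) + 2 * (2 * β) := (abs_sub _ _).trans (add_le_add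
        (abs_sum_intEdges_div_sub_le hm hm' hedge hcount' P hP)
        (abs_sum_degSum_div_sq_sub_le hm hm' hvol hcount P))
    _ = (k + 5) * β := by ring

theorem modularity_le_add {G G' : SimpleGraph V} {β : ℝ}
    (hm : 0 < edgeCount G) (hm' : 0 < edgeCount G')
    (hcut : ∀ S T, |(ePairs G S T : ℝ) - ePairs G' S T| ≤ 2 * β * edgeCount G')
    {k : ℕ} (hk : 0 < k) :
    modularity G ≤ modularity G' + (1 / k + (k + 5) * β) := by
  refine ciSup_le fun P => ?_
  obtain ⟨Q, hQ, hPQ⟩ := exists_card_parts_le_modScore_le G P hk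
  have hclose := (abs_sub_le_iff.mp (abs_modScore_sub_le hm hm' hcut Q hQ)).1
  linarith [modScore_le_modularity G' Q]

end Graph

theorem one_div_ceil_add_mul_le {ε : ℝ} (hε : 0 < ε) :
    1 / ⌈2 / ε⌉₊ + (⌈2 / ε⌉₊ + 5) * (ε / (14 + 4 / ε)) ≤ ε := by
  have hk : 2 / ε ≤ ⌈2 / ε⌉₊ := Nat.le_ceil _
  have hk' : (⌈2 / ε⌉₊ : ℝ) < 2 / ε + 1 := Nat.ceil_lt_add_one (by positivity)
  have hinv : 1 / (⌈2 / ε⌉₊ : ℝ) ≤ ε / 2 := by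
    rw [div_le_iff₀ (by positivity)]
    rw [div_le_iff₀ hε] at hk
    nlinarith
  have hrest : (⌈2 / ε⌉₊ + 5) * (ε / (14 + 4 / ε)) ≤ ε / 2 := by
    calc (⌈2 / ε⌉₊ + 5) * (ε / (14 + 4 / ε)) ≤ (2 / ε + 6) * (ε / (14 + 4 / ε)) := by
          exact mul_le_mul_of_nonneg_right (by linarith) (by positivity)
      _ = ε / 2 * ((4 + 12 * ε) / (4 + 14 * ε)) := by
          field_simp
          ring
      _ ≤ ε / 2 := by
          refine mul_le_of_le_one_right (by positivity) ?_
          rw [div_le_one (by positivity)]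
          linarith
  linarith

theorem statement16_general (ρ ε : ℝ) (hρ0 : 0 < ρ) (hε0 : 0 < ε)
    (V : Type) [Fintype V] [DecidableEq V] (G G' : SimpleGraph V)
    (hG : ρ * (Fintype.card V : ℝ) ^ 2 / 2 ≤ (edgeCount G : ℝ))
    (hG' : ρ * (Fintype.card V : ℝ) ^ 2 / 2 ≤ (edgeCount G' : ℝ))
    (hdist : cutDist G G' ≤ ρ * ε / (14 + 4 / ε)) :
    |modularity G - modularity G'| ≤ ε := by
  cases isEmpty_or_nonempty V
  · rw [show G = G' from SimpleGraph.ext (funext isEmptyElim), sub_self, abs_zero]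
    exact hε0.le
  set β := ε / (14 + 4 / ε)
  have hm : 0 < edgeCount G := by exact_mod_cast (show (0 : ℝ) < _ by positivity).trans_le hG
  have hm' : 0 < edgeCount G' := by exact_mod_cast (show (0 : ℝ) < _ by positivity).trans_le hG'
  have hcut : ∀ S T, |(ePairs G S T : ℝ) - ePairs G' S T| ≤ 2 * β * (ρ * Fintype.card V ^ 2 / 2) :=
    fun S T => (abs_ePairs_sub_ePairs_le G G' S T).trans
      ((mul_le_mul_of_nonneg_right hdist (by positivity)).trans_eq (by ring))
  have hk : 0 < ⌈2 / ε⌉₊ := Nat.ceil_pos.mpr (by positivity)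
  have hle := modularity_le_add hm hm' (fun S T => (hcut S T).trans (by gcongr)) hk
  have hge := modularity_le_add hm' hm
    (fun S T => (abs_sub_comm (ePairs G' S T : ℝ) _).trans_le ((hcut S T).trans (by gcongr))) hk
  have herr := one_div_ceil_add_mul_le hε0
  rw [abs_sub_le_iff]
  constructor <;> linarith

/-- Modularity is continuous in cut distance for dense graphs: let 0 < ρ < 1,
0 < ε < 1, and δ = ρ·ε / (14 + 4/ε). If G, G′ are graphs on the same n-element
vertex set, each with at least ρ·n²/2 edges, and d_□(G, G′) ≤ δ, then
|q*(G) − q*(G′)| ≤ ε. -/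
theorem statement16 (ρ ε : ℝ) (hρ0 : 0 < ρ) (hρ1 : ρ < 1) (hε0 : 0 < ε) (hε1 : ε < 1)
    (V : Type) [Fintype V] [DecidableEq V] (G G' : SimpleGraph V)
    (hG : ρ * (Fintype.card V : ℝ) ^ 2 / 2 ≤ (edgeCount G : ℝ))
    (hG' : ρ * (Fintype.card V : ℝ) ^ 2 / 2 ≤ (edgeCount G' : ℝ))
    (hdist : cutDist G G' ≤ ρ * ε / (14 + 4 / ε)) :
    |modularity G - modularity G'| ≤ ε :=
  statement16_general ρ ε hρ0 hε0 V G G' hG hG' hdist
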